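/- For finite simple graphs G and H, the number of induced paths P₃ (3-vertex subsets inducing exactly 2 edges) in inflate(G,H) equals |G|·P(H) + 2·e(G)·(C(|H|,2) − e(H))·|H| + P(G)·|H|³, where P(X) denotes the number of 3-vertex subsets of X inducing exactly two edges. -/

import Mathlib

open scoped Classical

/-- The inflation (lexicographic product) of `G` with `H`: vertex set `α × β`,
with `(g₁,h₁) ~ (g₂,h₂)` iff `g₁ ~ g₂` in `G`, or `g₁ = g₂` and `h₁ ~ h₂` in `H`. -/
def inflate {α β : Type*} (G : SimpleGraph α) (H : SimpleGraph β) :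
    SimpleGraph (α × β) where
  Adj p q := G.Adj p.1 q.1 ∨ (p.1 = q.1 ∧ H.Adj p.2 q.2)
  symm := by
    constructor
    rintro p q (h | ⟨h1, h2⟩)
    · exact Or.inl h.symm
    · exact Or.inr ⟨h1.symm, h2.symm⟩
  loopless := by
    constructor
    rintro p (h | ⟨-, h⟩)
    · exact G.irrefl h
    · exact H.irrefl h

/-- The number of edges of a graph. -/
noncomputable def edgeCount {V : Type*} (G : SimpleGraph V) : ℕ :=
  Nat.card G.edgeSet

/-- Twice the number of edges of `G` inside the vertex subset `s`
(counting ordered adjacent pairs). -/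
noncomputable def edgePairsIn {V : Type*} [Fintype V] (G : SimpleGraph V)
    (s : Finset V) : ℕ :=
  ((s ×ˢ s).filter fun p => G.Adj p.1 p.2).card

/-- The number of 3-element vertex subsets of `G` whose induced subgraph has
exactly `j` edges. -/
noncomputable def tripleCount {V : Type*} [Fintype V] (G : SimpleGraph V) (j : ℕ) : ℕ :=
  ((Finset.powersetCard 3 (Finset.univ : Finset V)).filter
    fun s => edgePairsIn G s = 2 * j).card

/-!
We count ordered induced paths `a - b - c` instead of vertex sets: an induced `P₃` is the vertex
set of exactly two of them, `a - b - c` and `c - b - a`. An ordered induced path of `inflate G H`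
has one of three shapes: it lies in a single fibre `{g} × β`, where it is an induced path of `H`;
its ends lie in one fibre and its middle in an adjacent fibre, and then the only constraint is that
the ends are distinct and non-adjacent in `H`; or its vertices lie in three fibres that form an
induced path of `G`, with arbitrary `H`-coordinates. The three shapes contribute
`|G| · 2P(H)`, `2e(G) · 2e(Hᶜ) · |H|` and `2P(G) · |H|³` ordered paths.
-/

open Finset SimpleGraph

section InducedPath

variable {V : Type*} {X : SimpleGraph V} {a b c : V}

def SimpleGraph.IsInducedPath (X : SimpleGraph V) (a b c : V) : Prop :=
  X.Adj a b ∧ X.Adj b c ∧ Xᶜ.Adj a c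

lemma SimpleGraph.IsInducedPath.symm (h : X.IsInducedPath a b c) : X.IsInducedPath c b a :=
  ⟨h.2.1.symm, h.1.symm, h.2.2.symm⟩

variable [Fintype V]

noncomputable def SimpleGraph.inducedPaths (X : SimpleGraph V) : Finset (V × V × V) :=
  univ.filter fun t => X.IsInducedPath t.1 t.2.1 t.2.2

@[simp]
lemma SimpleGraph.mem_inducedPaths {t : V × V × V} :
    t ∈ X.inducedPaths ↔ X.IsInducedPath t.1 t.2.1 t.2.2 := by
  simp [inducedPaths]

lemma edgePairsIn_triple (hab : a ≠ b) (hac : a ≠ c) (hbc : b ≠ c) :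
    edgePairsIn X {a, b, c} =
      (if X.Adj a b then 2 else 0) + (if X.Adj b c then 2 else 0) +
        (if X.Adj a c then 2 else 0) := by
  rw [edgePairsIn, card_filter, sum_product]
  simp only [sum_insert (show a ∉ ({b, c} : Finset V) by simp [hab, hac]),
    sum_insert (show b ∉ ({c} : Finset V) by simp [hbc]), sum_singleton, X.irrefl, if_false,
    X.adj_comm b a, X.adj_comm c a, X.adj_comm c b]
  split_ifs <;> omega

lemma edgePairsIn_of_isInducedPath (h : X.IsInducedPath a b c) :
    edgePairsIn X {a, b, c} = 4 := by
  rw [edgePairsIn_triple h.1.ne h.2.2.ne h.2.1.ne, if_pos h.1, if_pos h.2.1,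
    if_neg ((compl_adj X a c).1 h.2.2).2]

lemma exists_isInducedPath_of_edgePairsIn_eq_four {s : Finset V} (hs : #s = 3)
    (h : edgePairsIn X s = 4) : ∃ a b c, X.IsInducedPath a b c ∧ s = {a, b, c} := by
  obtain ⟨a, b, c, hab, hac, hbc, rfl⟩ := card_eq_three.1 hs
  rw [edgePairsIn_triple hab hac hbc] at h
  by_cases hab' : X.Adj a b <;> by_cases hbc' : X.Adj b c <;> by_cases hac' : X.Adj a c <;>
    simp only [hab', hbc', hac', if_true, if_false] at h <;> try omega
  · exact ⟨a, b, c, ⟨hab', hbc', (compl_adj X a c).2 ⟨hac, hac'⟩⟩, rfl⟩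
  · exact ⟨b, a, c, ⟨hab'.symm, hac', (compl_adj X b c).2 ⟨hbc, hbc'⟩⟩, insert_comm _ _ _⟩
  · exact ⟨a, c, b, ⟨hac', hbc'.symm, (compl_adj X a b).2 ⟨hab, hab'⟩⟩, by rw [pair_comm]⟩

lemma filter_inducedPaths_vertexSet_eq (h : X.IsInducedPath a b c) :
    (X.inducedPaths.filter fun t => ({t.1, t.2.1, t.2.2} : Finset V) = {a, b, c}) =
      {(a, b, c), (c, b, a)} := by
  ext ⟨x, y, z⟩
  simp only [mem_filter, mem_inducedPaths, mem_insert, mem_singleton, Prod.mk.injEq]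
  constructor
  · rintro ⟨hp, hs⟩
    have hsub : ∀ v ∈ ({x, y, z} : Finset V), v = a ∨ v = b ∨ v = c := by simp [hs]
    have hx := hsub x (by simp)
    have hy := hsub y (by simp)
    have hz := hsub z (by simp)
    simp only [IsInducedPath, compl_adj] at h hp
    grind [SimpleGraph.irrefl, SimpleGraph.adj_symm]
  · rintro (⟨rfl, rfl, rfl⟩ | ⟨rfl, rfl, rfl⟩)
    · exact ⟨h, rfl⟩
    · exact ⟨h.symm, by grind⟩

lemma card_inducedPaths (X : SimpleGraph V) : #X.inducedPaths = 2 * tripleCount X 2 := by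
  rw [tripleCount, card_eq_sum_card_fiberwise (f := fun t => ({t.1, t.2.1, t.2.2} : Finset V))
    (t := (powersetCard 3 univ).filter fun s => edgePairsIn X s = 2 * 2), sum_const_nat,
    mul_comm]
  · intro s hs
    rw [mem_filter, mem_powersetCard] at hs
    obtain ⟨a, b, c, h, rfl⟩ := exists_isInducedPath_of_edgePairsIn_eq_four hs.1.2 hs.2
    rw [filter_inducedPaths_vertexSet_eq h, card_pair (by simp [h.2.2.ne])]
  · intro t ht
    rw [mem_coe, mem_inducedPaths] at ht
    rw [coe_filter, Set.mem_ofPred_eq, mem_powersetCard]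
    exact ⟨⟨subset_univ _, card_eq_three.2 ⟨_, _, _, ht.1.ne, ht.2.2.ne, ht.2.1.ne, rfl⟩⟩,
      edgePairsIn_of_isInducedPath ht⟩

lemma card_filter_adj (X : SimpleGraph V) [DecidableRel X.Adj] :
    #(univ.filter fun x : V × V => X.Adj x.1 x.2) = 2 * edgeCount X := by
  rw [edgeCount, Nat.card_eq_fintype_card, ← edgeFinset_card, two_mul_card_edgeFinset]

lemma edgeCount_compl (X : SimpleGraph V) :
    edgeCount Xᶜ = (Fintype.card V).choose 2 - edgeCount X := by
  suffices edgeCount X + edgeCount Xᶜ = (Fintype.card V).choose 2 by omega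
  simp only [edgeCount, Nat.card_eq_fintype_card, ← edgeFinset_card]
  rw [← card_union_of_disjoint (disjoint_edgeFinset.2 disjoint_compl_right), ← edgeFinset_sup,
    ← card_edgeFinset_top_eq_card_choose_two]
  congr!
  exact sup_compl_eq_top

end InducedPath

section Inflate

variable {α β : Type*} {G : SimpleGraph α} {H : SimpleGraph β}

@[simp]
lemma inflate_adj {p q : α × β} :
    (inflate G H).Adj p q ↔ G.Adj p.1 q.1 ∨ (p.1 = q.1 ∧ H.Adj p.2 q.2) := Iff.rfl

lemma isInducedPath_inflate_iff {p q r : α × β} :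
    (inflate G H).IsInducedPath p q r ↔
      (p.1 = q.1 ∧ q.1 = r.1 ∧ H.IsInducedPath p.2 q.2 r.2) ∨
      (p.1 = r.1 ∧ G.Adj p.1 q.1 ∧ Hᶜ.Adj p.2 r.2) ∨
      G.IsInducedPath p.1 q.1 r.1 := by
  have := G.adj_comm p.1 q.1
  simp only [IsInducedPath, inflate_adj, compl_adj, ne_eq, Prod.ext_iff]
  grind [SimpleGraph.irrefl]

variable [Fintype α] [Fintype β]

lemma card_triples_in_one_fiber :
    #(univ.filter fun t : (α × β) × (α × β) × (α × β) =>
        t.1.1 = t.2.1.1 ∧ t.2.1.1 = t.2.2.1 ∧ H.IsInducedPath t.1.2 t.2.1.2 t.2.2.2) =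
      Fintype.card α * #H.inducedPaths := by
  rw [← card_univ, ← card_product]
  refine card_nbij' (fun t => (t.1.1, t.1.2, t.2.1.2, t.2.2.2))
    (fun p => ((p.1, p.2.1), (p.1, p.2.2.1), (p.1, p.2.2.2))) ?_ ?_ ?_ ?_ <;> intro t <;> aesop

lemma card_triples_ends_in_one_fiber :
    #(univ.filter fun t : (α × β) × (α × β) × (α × β) =>
        t.1.1 = t.2.2.1 ∧ G.Adj t.1.1 t.2.1.1 ∧ Hᶜ.Adj t.1.2 t.2.2.2) =
      #(univ.filter fun x : α × α => G.Adj x.1 x.2) *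
        #(univ.filter fun y : β × β => Hᶜ.Adj y.1 y.2) * Fintype.card β := by
  rw [← card_univ, ← card_product, ← card_product]
  refine card_nbij' (fun t => (((t.1.1, t.2.1.1), (t.1.2, t.2.2.2)), t.2.1.2))
    (fun p => ((p.1.1.1, p.1.2.1), (p.1.1.2, p.2), (p.1.1.1, p.1.2.2))) ?_ ?_ ?_ ?_ <;>
    intro t <;> aesop

lemma card_triples_over_inducedPath :
    #(univ.filter fun t : (α × β) × (α × β) × (α × β) =>
        G.IsInducedPath t.1.1 t.2.1.1 t.2.2.1) =
      #G.inducedPaths * Fintype.card β ^ 3 := by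
  rw [pow_three, ← Fintype.card_prod, ← Fintype.card_prod, ← card_univ, ← card_product]
  refine card_nbij' (fun t => ((t.1.1, t.2.1.1, t.2.2.1), (t.1.2, t.2.1.2, t.2.2.2)))
    (fun p => ((p.1.1, p.2.1), (p.1.2.1, p.2.2.1), (p.1.2.2, p.2.2.2))) ?_ ?_ ?_ ?_ <;>
    intro t <;> aesop

lemma card_inducedPaths_inflate :
    #(inflate G H).inducedPaths =
      Fintype.card α * #H.inducedPaths +
        #(univ.filter fun x : α × α => G.Adj x.1 x.2) *
          #(univ.filter fun y : β × β => Hᶜ.Adj y.1 y.2) * Fintype.card β +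
        #G.inducedPaths * Fintype.card β ^ 3 := by
  rw [← card_triples_in_one_fiber, ← card_triples_ends_in_one_fiber,
    ← card_triples_over_inducedPath, ← card_union_of_disjoint, ← card_union_of_disjoint,
    ← filter_or, ← filter_or]
  · congr 1
    ext t
    simp [isInducedPath_inflate_iff, or_assoc]
  all_goals
    simp only [disjoint_union_left, disjoint_filter, IsInducedPath, compl_adj]
    grind [SimpleGraph.irrefl]

end Inflate

/-- The number of induced paths `P₃` in `inflate G H` is
`|G|·P(H) + 2·e(G)·(C(|H|,2) − e(H))·|H| + P(G)·|H|³`. -/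
theorem stmt12 {α β : Type*} [Fintype α] [Fintype β]
    (G : SimpleGraph α) (H : SimpleGraph β) :
    tripleCount (inflate G H) 2 =
      Fintype.card α * tripleCount H 2 +
        2 * edgeCount G * ((Fintype.card β).choose 2 - edgeCount H) * Fintype.card β +
        tripleCount G 2 * (Fintype.card β) ^ 3 := by
  have h := card_inducedPaths_inflate (G := G) (H := H)
  rw [card_inducedPaths, card_inducedPaths, card_inducedPaths, card_filter_adj G,
    card_filter_adj Hᶜ, edgeCount_compl] at h
  apply Nat.eq_of_mul_eq_mul_left two_pos
  rw [h]
  ring
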